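/- arXiv:2502.07402 — 5 statements merged into one kernel-verified Lean document; each statement's English description precedes it below -/
import Mathlib

section
/- The infinite series for the tie probability equals the finite sum: for every positive integer k, ∑_{n=k}^∞ C(n-1,k-1)^2 (1/2)^{2n} = ∑_{n=0}^{k-1} C(2k-n-2,n) · C(2k-2n-2,k-n-1) · (1/3)^{2k-n-1}. -/
/-!
Write `j = k - 1` and `x = 1/4`, so that the series is `x ^ (j + 1) * ∑ₘ C(m+j,j)² xᵐ`.
Two Vandermonde convolutions give `C(m+j,j)² = ∑ᵢ C(j,i)² C(m+2j-i,2j)`, which turns the series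
into a finite combination of shifted negative-binomial series `∑ₘ C(m+N,N) xᵐ = (1-x)^-(N+1)`:
`∑ₘ C(m+j,j)² xᵐ = (∑ᵢ C(j,i)² xⁱ) / (1-x)^(2j+1)`. At `x = 1/4` the series therefore equals
`3^-(2j+1) ∑ᵢ C(j,i)² 4^(j-i)`, and expanding `4^(j-i) = (3+1)^(j-i)` and resumming with the same
convolution recovers `3^-(2j+1) ∑ₙ C(2j-n,n) C(2j-2n,j-n) 3ⁿ`.
-/

open Finset

namespace Nat

theorem choose_mul_choose_sub_comm (n i s : ℕ) :
    n.choose i * (n - i).choose s = n.choose s * (n - s).choose i := by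
  rcases le_or_gt (i + s) n with h | h
  · have hi := choose_mul (n := n) (Nat.le_add_right i s)
    have hs := choose_mul (n := n) (Nat.le_add_left s i)
    rw [Nat.add_sub_cancel_left, Nat.add_comm i s] at hi
    rw [Nat.add_sub_cancel, Nat.add_comm i s, choose_symm_add] at hs
    rw [← hi, ← hs]
  · rcases le_or_gt i n with hi | hi
    · rw [choose_eq_zero_of_lt (show n - i < s by omega)]
      rcases le_or_gt s n with hs | hs
      · rw [choose_eq_zero_of_lt (show n - s < i by omega), Nat.mul_zero, Nat.mul_zero]
      · rw [choose_eq_zero_of_lt hs, Nat.mul_zero, Nat.zero_mul]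
    · rw [choose_eq_zero_of_lt hi, choose_eq_zero_of_lt (show n - s < i by omega), Nat.mul_zero,
        Nat.zero_mul]

theorem sum_range_choose_mul_choose_sub {a c n N : ℕ} (ha : a ≤ N) (hN : N ≤ n) :
    ∑ b ∈ range (N + 1), a.choose b * c.choose (n - b) = (a + c).choose n := by
  rw [add_choose_eq, Finset.Nat.sum_antidiagonal_eq_sum_range_succ_mk]
  refine sum_subset (range_subset_range.mpr (by omega)) fun b _ hb => ?_
  rw [choose_eq_zero_of_lt (by simp at hb; omega), Nat.zero_mul]

theorem sum_range_choose_sq_mul_choose_sub {j b : ℕ} (hb : b ≤ j) :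
    ∑ i ∈ range (j + 1), j.choose i ^ 2 * (j - i).choose b
      = j.choose b * (2 * j - b).choose j := by
  calc ∑ i ∈ range (j + 1), j.choose i ^ 2 * (j - i).choose b
      = ∑ i ∈ range (j + 1), j.choose b * ((j - b).choose i * j.choose (j - i)) := by
        refine sum_congr rfl fun i hi => ?_
        rw [sq, Nat.mul_assoc, choose_mul_choose_sub_comm,
          choose_symm (mem_range_succ_iff.mp hi)]
        ring
    _ = j.choose b * (2 * j - b).choose j := by
        rw [← mul_sum, sum_range_choose_mul_choose_sub (by omega) le_rfl,
          show j - b + j = 2 * j - b by omega]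

theorem choose_add_sq_eq_sum (m j : ℕ) :
    (m + j).choose j ^ 2
      = ∑ i ∈ range (j + 1), j.choose i ^ 2 * (m + 2 * j - i).choose (2 * j) :=
  calc (m + j).choose j ^ 2
      = ∑ b ∈ range (j + 1), (m + j).choose j * (j.choose b * m.choose (j - b)) := by
        rw [← mul_sum, sum_range_choose_mul_choose_sub le_rfl le_rfl, Nat.add_comm j m, sq]
    _ = ∑ b ∈ range (j + 1), (∑ i ∈ range (j + 1), j.choose i ^ 2 * (j - i).choose b) *
          (m + j).choose (2 * j - b) := by
        refine sum_congr rfl fun b hb => ?_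
        have hbj := mem_range_succ_iff.mp hb
        have h := choose_mul (n := m + j) (k := 2 * j - b) (s := j) (by omega)
        rw [show m + j - j = m by omega, show 2 * j - b - j = j - b by omega] at h
        rw [sum_range_choose_sq_mul_choose_sub hbj, Nat.mul_assoc,
          Nat.mul_comm ((2 * j - b).choose j), h]
        ring
    _ = ∑ i ∈ range (j + 1), j.choose i ^ 2 * (m + 2 * j - i).choose (2 * j) := by
        simp_rw [sum_mul]
        rw [sum_comm]
        refine sum_congr rfl fun i hi => ?_
        have hij := mem_range_succ_iff.mp hi
        simp_rw [Nat.mul_assoc, ← mul_sum]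
        rw [sum_range_choose_mul_choose_sub (by omega) (by omega),
          show j - i + (m + j) = m + 2 * j - i by omega]

end Nat

theorem sum_range_choose_mul_choose_mul_pow {R : Type*} [CommSemiring R] (j : ℕ) (y : R) :
    ∑ n ∈ range (j + 1), ((2 * j - n).choose n : R) * (2 * j - 2 * n).choose (j - n) * y ^ n
      = ∑ i ∈ range (j + 1), (j.choose i : R) ^ 2 * (y + 1) ^ (j - i) := by
  have binomial : ∀ i ∈ range (j + 1),
      (j.choose i : R) ^ 2 * (y + 1) ^ (j - i)
        = ∑ n ∈ range (j + 1), ((j.choose i ^ 2 * (j - i).choose n : ℕ) : R) * y ^ n := by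
    intro i hi
    calc (j.choose i : R) ^ 2 * (y + 1) ^ (j - i)
        = ∑ n ∈ range (j - i + 1), ((j.choose i ^ 2 * (j - i).choose n : ℕ) : R) * y ^ n := by
          rw [add_pow, mul_sum]
          push_cast
          exact sum_congr rfl fun n _ => by ring
      _ = ∑ n ∈ range (j + 1), ((j.choose i ^ 2 * (j - i).choose n : ℕ) : R) * y ^ n :=
          sum_subset (range_subset_range.mpr (by omega)) fun n _ hn => by
            rw [Nat.choose_eq_zero_of_lt (n := j - i) (by simp at hn; omega)]
            simp
  rw [sum_congr rfl binomial, sum_comm]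
  refine sum_congr rfl fun n hn => ?_
  have hnj := mem_range_succ_iff.mp hn
  have h := Nat.choose_mul (n := 2 * j - n) (k := j) (s := n) hnj
  rw [show 2 * j - n - n = 2 * j - 2 * n by omega] at h
  rw [← sum_mul, ← Nat.cast_sum, Nat.sum_range_choose_sq_mul_choose_sub hnj,
    mul_comm (j.choose n), h]
  push_cast
  ring

section Geometric

variable {𝕜 : Type*} [NormedField 𝕜] {x : 𝕜}

theorem hasSum_choose_sub_mul_geometric {N i : ℕ} (hi : i ≤ N) (hx : ‖x‖ < 1) :
    HasSum (fun m : ℕ => ((m + N - i).choose N : 𝕜) * x ^ m) (x ^ i / (1 - x) ^ (N + 1)) := by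
  have shifted : HasSum (fun m : ℕ => ((m + i + N - i).choose N : 𝕜) * x ^ (m + i))
      (x ^ i / (1 - x) ^ (N + 1)) := by
    rw [div_eq_mul_one_div]
    refine ((hasSum_choose_mul_geometric_of_norm_lt_one N hx).mul_left (x ^ i)).congr_fun
      fun m => ?_
    rw [show m + i + N - i = m + N by omega, pow_add]
    ring
  have head_vanishes : ∑ m ∈ range i, ((m + N - i).choose N : 𝕜) * x ^ m = 0 :=
    sum_eq_zero fun m hm => by
      rw [Nat.choose_eq_zero_of_lt (by rw [mem_range] at hm; omega), Nat.cast_zero, zero_mul]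
  have := (hasSum_nat_add_iff (f := fun m : ℕ => ((m + N - i).choose N : 𝕜) * x ^ m) i).mp shifted
  rwa [head_vanishes, add_zero] at this

theorem hasSum_choose_add_sq_mul_geometric (j : ℕ) (hx : ‖x‖ < 1) :
    HasSum (fun m : ℕ => ((m + j).choose j : 𝕜) ^ 2 * x ^ m)
      ((∑ i ∈ range (j + 1), (j.choose i : 𝕜) ^ 2 * x ^ i) / (1 - x) ^ (2 * j + 1)) := by
  have h := hasSum_sum (s := range (j + 1)) fun i hi =>
    (hasSum_choose_sub_mul_geometric (N := 2 * j) (i := i) (by rw [mem_range] at hi; omega)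
      hx).mul_left ((j.choose i : 𝕜) ^ 2)
  simp_rw [sum_div, mul_div_assoc]
  refine h.congr_fun fun m => ?_
  rw [← Nat.cast_pow, Nat.choose_add_sq_eq_sum, Nat.cast_sum, sum_mul]
  push_cast
  exact sum_congr rfl fun i _ => by ring

end Geometric

theorem tsum_choose_add_sq_mul_inv_four_pow (j : ℕ) :
    ∑' m : ℕ, ((m + j).choose j : ℝ) ^ 2 * 4⁻¹ ^ m
      = 4 ^ (j + 1) * 3⁻¹ ^ (2 * j + 1) *
          ∑ i ∈ range (j + 1), (j.choose i : ℝ) ^ 2 * 4 ^ (j - i) := by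
  have rescale : ∀ i ∈ range (j + 1), (j.choose i : ℝ) ^ 2 * 4⁻¹ ^ i
      = 4⁻¹ ^ j * ((j.choose i : ℝ) ^ 2 * 4 ^ (j - i)) := by
    intro i hi
    rw [inv_pow, inv_pow, pow_sub₀ _ (by norm_num) (mem_range_succ_iff.mp hi)]
    field_simp
  have quarter_lt_one : ‖(4⁻¹ : ℝ)‖ < 1 := by norm_num [abs_of_pos]
  rw [(hasSum_choose_add_sq_mul_geometric j quarter_lt_one).tsum_eq, sum_congr rfl rescale,
    ← mul_sum, show (1 : ℝ) - 4⁻¹ = 3 / 4 by norm_num, div_pow, inv_pow, inv_pow]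
  field_simp
  ring

/-- The infinite series for the tie probability in the M&M game (two players,
`k` M&M's each, fair coins) equals the finite sum coming from the compressed game.
The infinite sum over `n ≥ k` is reindexed by `n = m + k`. -/
theorem mm_tie_infinite_eq_finite (k : ℕ) (hk : 0 < k) :
    ∑' m : ℕ, (((m + k - 1).choose (k - 1) : ℝ)) ^ 2 * (1 / 2) ^ (2 * (m + k)) =
      ∑ n ∈ Finset.range k,
        ((2 * k - n - 2).choose n : ℝ) * ((2 * k - 2 * n - 2).choose (k - n - 1)) *
          (1 / 3) ^ (2 * k - n - 1) := by
  obtain ⟨j, rfl⟩ : ∃ j, k = j + 1 := ⟨k - 1, by omega⟩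
  have lhs_term (m : ℕ) :
      ((m + (j + 1) - 1).choose (j + 1 - 1) : ℝ) ^ 2 * (1 / 2) ^ (2 * (m + (j + 1)))
        = 4⁻¹ ^ (j + 1) * (((m + j).choose j : ℝ) ^ 2 * 4⁻¹ ^ m) := by
    rw [Nat.add_succ_sub_one, Nat.add_sub_cancel, pow_mul, pow_add]
    norm_num
    ring
  have rhs_term : ∀ n ∈ range (j + 1),
      ((2 * (j + 1) - n - 2).choose n : ℝ) * ((2 * (j + 1) - 2 * n - 2).choose (j + 1 - n - 1))
          * (1 / 3) ^ (2 * (j + 1) - n - 1)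
        = 3⁻¹ ^ (2 * j + 1) *
            (((2 * j - n).choose n : ℝ) * (2 * j - 2 * n).choose (j - n) * 3 ^ n) := by
    intro n hn
    rw [mem_range] at hn
    rw [show 2 * (j + 1) - n - 2 = 2 * j - n by omega,
      show 2 * (j + 1) - 2 * n - 2 = 2 * j - 2 * n by omega, show j + 1 - n - 1 = j - n by omega,
      show 2 * (j + 1) - n - 1 = 2 * j + 1 - n by omega, one_div, inv_pow, inv_pow,
      pow_sub₀ _ (by norm_num) (by omega)]
    field_simp
  rw [tsum_congr lhs_term, tsum_mul_left, tsum_choose_add_sq_mul_inv_four_pow,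
    sum_congr rfl rhs_term, ← mul_sum, sum_range_choose_mul_choose_mul_pow,
    show (3 : ℝ) + 1 = 4 by norm_num, ← mul_assoc, ← mul_assoc, ← mul_pow,
    inv_mul_cancel₀ four_ne_zero, one_pow, one_mul]
end

section
/- For every positive integer k, the series ∑_{n=k}^∞ C(n-1,k-1)^2 (1/2)^{2n} converges and its value lies in the open interval (0,1). -/
/-!
Write `k = j + 1` and let `a m = C(m+j, j) / 2^(m+j+1)`, the probability that the `(j+1)`-st head
of a fair coin appears at toss `m + j + 1`. The summand is `a m ^ 2`. The `a m` sum to `1`, and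
each is at most `1/2` because `C(m+j, j) ≤ 2^(m+j)`, so `∑ a m ^ 2 ≤ (1/2) ∑ a m = 1/2`.
-/

section SquaresOfBoundedSummable

variable {ι : Type*} {a : ι → ℝ} {c : ℝ}

lemma sq_le_mul_of_nonneg_of_le (h0 : ∀ i, 0 ≤ a i) (hc : ∀ i, a i ≤ c) (i : ι) :
    a i ^ 2 ≤ c * a i := by
  rw [sq]
  exact mul_le_mul_of_nonneg_right (hc i) (h0 i)

lemma Summable.sq_of_nonneg_of_le (ha : Summable a) (h0 : ∀ i, 0 ≤ a i) (hc : ∀ i, a i ≤ c) :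
    Summable fun i => a i ^ 2 :=
  (ha.mul_left c).of_nonneg_of_le (fun _ => sq_nonneg _) (sq_le_mul_of_nonneg_of_le h0 hc)

lemma tsum_sq_le_mul_tsum_of_nonneg_of_le (ha : Summable a) (h0 : ∀ i, 0 ≤ a i)
    (hc : ∀ i, a i ≤ c) : ∑' i, a i ^ 2 ≤ c * ∑' i, a i := by
  rw [← tsum_mul_left]
  exact (ha.sq_of_nonneg_of_le h0 hc).tsum_le_tsum (sq_le_mul_of_nonneg_of_le h0 hc)
    (ha.mul_left c)

end SquaresOfBoundedSummable

theorem hasSum_negBinomial (j : ℕ) {p : ℝ} (hp0 : 0 < p) (hp1 : p ≤ 1) :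
    HasSum (fun m : ℕ => ((m + j).choose j : ℝ) * (1 - p) ^ m * p ^ (j + 1)) 1 := by
  have hq : ‖1 - p‖ < 1 := by rw [Real.norm_eq_abs, abs_lt]; constructor <;> linarith
  have h := (hasSum_choose_mul_geometric_of_norm_lt_one j hq).mul_right (p ^ (j + 1))
  rwa [sub_sub_cancel, one_div, inv_mul_cancel₀ (by positivity)] at h

noncomputable def fairNegBinomial (j m : ℕ) : ℝ :=
  ((m + j).choose j : ℝ) * (1 / 2) ^ (m + j + 1)

namespace fairNegBinomial

theorem hasSum (j : ℕ) : HasSum (fairNegBinomial j) 1 := by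
  convert hasSum_negBinomial j (p := 1 / 2) (by norm_num) (by norm_num) using 2 with m
  rw [fairNegBinomial, mul_assoc, show (1 : ℝ) - 1 / 2 = 1 / 2 by norm_num, ← pow_add,
    add_assoc]

theorem pos (j m : ℕ) : 0 < fairNegBinomial j m := by
  have : 0 < (m + j).choose j := Nat.choose_pos (Nat.le_add_left j m)
  unfold fairNegBinomial
  positivity

theorem le_half (j m : ℕ) : fairNegBinomial j m ≤ 1 / 2 := by
  have hchoose : ((m + j).choose j : ℝ) ≤ 2 ^ (m + j) := by
    exact_mod_cast Nat.choose_le_two_pow (m + j) j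
  calc fairNegBinomial j m ≤ 2 ^ (m + j) * (1 / 2) ^ (m + j + 1) :=
        mul_le_mul_of_nonneg_right hchoose (by positivity)
    _ = 1 / 2 := by rw [pow_succ, ← mul_assoc, ← mul_pow]; norm_num

end fairNegBinomial

theorem tie_summand_eq_sq_fairNegBinomial (j m : ℕ) :
    (((m + (j + 1) - 1).choose (j + 1 - 1) : ℝ)) ^ 2 * (1 / 2) ^ (2 * (m + (j + 1))) =
      fairNegBinomial j m ^ 2 := by
  rw [Nat.add_sub_cancel, ← add_assoc, Nat.add_sub_cancel, fairNegBinomial, mul_pow, ← pow_mul,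
    mul_comm (m + j + 1)]

/-- The tie-probability series `∑_{n=k}^∞ C(n-1,k-1)^2 (1/2)^{2n}` (reindexed by
`n = m + k`) converges and its value lies in `(0,1)`. -/
theorem mm_tie_series_summable_mem_Ioo (k : ℕ) (hk : 0 < k) :
    Summable (fun m : ℕ => (((m + k - 1).choose (k - 1) : ℝ)) ^ 2 * (1 / 2) ^ (2 * (m + k))) ∧
    0 < ∑' m : ℕ, (((m + k - 1).choose (k - 1) : ℝ)) ^ 2 * (1 / 2) ^ (2 * (m + k)) ∧
    ∑' m : ℕ, (((m + k - 1).choose (k - 1) : ℝ)) ^ 2 * (1 / 2) ^ (2 * (m + k)) < 1 := by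
  obtain ⟨j, rfl⟩ : ∃ j, k = j + 1 := Nat.exists_eq_add_one.mpr hk
  simp only [tie_summand_eq_sq_fairNegBinomial]
  have hnonneg := fun m => (fairNegBinomial.pos j m).le
  have hsummable := (fairNegBinomial.hasSum j).summable.sq_of_nonneg_of_le hnonneg
    (fairNegBinomial.le_half j)
  refine ⟨hsummable, hsummable.tsum_pos (fun m => sq_nonneg _) 0
    (pow_pos (fairNegBinomial.pos j 0) 2), ?_⟩
  calc ∑' m, fairNegBinomial j m ^ 2 ≤ 1 / 2 * ∑' m, fairNegBinomial j m :=
        tsum_sq_le_mul_tsum_of_nonneg_of_le (fairNegBinomial.hasSum j).summable hnonneg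
          (fairNegBinomial.le_half j)
    _ < 1 := by rw [(fairNegBinomial.hasSum j).tsum_eq]; norm_num
end

section
/- For k = 2, the probability of a tie in the M&M game equals ∑_{n=2}^∞ (n-1)^2 (1/4)^n = 5/27. -/
/-- For `k = 2`, the tie probability `∑_{n=2}^∞ (n-1)^2 (1/4)^n` equals `5/27`
(reindexed by `n = m + 2`). -/
theorem mm_tie_k_two :
    ∑' m : ℕ, ((m + 1 : ℝ)) ^ 2 * (1 / 4) ^ (m + 2) = 5 / 27 := by
  have hr : ‖(1 / 4 : ℝ)‖ < 1 := by norm_num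
  have A := hasSum_choose_mul_geometric_of_norm_lt_one (𝕜 := ℝ) 2 hr
  have B := hasSum_choose_mul_geometric_of_norm_lt_one (𝕜 := ℝ) 1 hr
  have C := (((A.mul_left 2).sub B).mul_left ((1/4 : ℝ)^2))
  have hfun : (fun m : ℕ => (1/4 : ℝ)^2 *
      (2 * ((m + 2).choose 2 * (1/4 : ℝ) ^ m) - (m + 1).choose 1 * (1/4 : ℝ) ^ m))
      = fun m : ℕ => ((m + 1 : ℝ)) ^ 2 * (1 / 4) ^ (m + 2) := by
    funext m
    have h2 : ((m + 2).choose 2 : ℝ) = (m + 1) * (m + 2) / 2 := by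
      rw [Nat.choose_two_right, Nat.cast_div (by simpa [Nat.mul_comm] using
        (Nat.even_mul_succ_self (m+1)).two_dvd) (by norm_num)]
      push_cast
      ring
    rw [h2, Nat.choose_one_right]
    push_cast
    ring
  rw [hfun] at C
  rw [C.tsum_eq]
  norm_num
end

section
/- For the M&M game with two players each starting with k ≥ 1 M&M's and both coins having heads-probability p ∈ (0,1), the probability of a tie equals ∑_{n=k}^∞ C(n-1,k-1)^2 p^{2k} (1-p)^{2(n-k)}, and this series converges. -/
open MeasureTheory ProbabilityTheory

/-!
A player with `k` M&M's finishes at round `n` (rounds counted from `0`) exactly when flip `n`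
is their `k`-th head, which has probability `C(n, k-1) p^k (1-p)^(n+1-k)`. By independence a
tie at round `n` has the square of this probability, and ties at different rounds are
disjoint, so the tie probability is the sum of the squares.

Only the probabilities of cylinders (all of the first `N` flips of both players fixed) are
known, and no event is known to be measurable. An event determined by the first `N`
flips is a finite union of cylinders; as the cylinders of level `N` cover the sample space and
their probabilities add up to `1`, subadditivity applied to the event and to its complement
already forces additivity. Countable additivity for the tie events then follows from the
partial unions.
-/

open Finset

namespace MMGame

def FinishesAt (k : ℕ) (P : ℕ → Prop) [DecidablePred P] (n : ℕ) : Prop :=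
  Nat.count P (n + 1) = k ∧ P n

section Finish

variable {k : ℕ} {P : ℕ → Prop} [DecidablePred P]

instance (n : ℕ) : Decidable (FinishesAt k P n) := inferInstanceAs (Decidable (_ ∧ _))

theorem FinishesAt.unique {m n : ℕ} (hm : FinishesAt k P m) (hn : FinishesAt k P n) :
    m = n := by
  have key {a b : ℕ} (ha : FinishesAt k P a) (hb : FinishesAt k P b) : ¬a < b := fun hab =>
    ((Nat.count_monotone P hab).trans_lt (Nat.count_strict_mono hb.2 b.lt_succ_self)).ne
      (ha.1.trans hb.1.symm)
  exact le_antisymm (not_lt.mp (key hn hm)) (not_lt.mp (key hm hn))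

theorem finishesAt_congr {Q : ℕ → Prop} [DecidablePred Q] {n : ℕ} (h : ∀ i ≤ n, P i ↔ Q i) :
    FinishesAt k P n ↔ FinishesAt k Q n := by
  simp only [FinishesAt, Nat.count_eq_card_filter_range]
  rw [filter_congr fun i hi => h i (Nat.lt_succ_iff.mp (mem_range.mp hi)), h n le_rfl]

end Finish

theorem finishesAt_mem_iff {k n : ℕ} {s : Finset ℕ} (hs : s ⊆ range (n + 1)) :
    FinishesAt k (· ∈ s) n ↔ #s = k ∧ n ∈ s := by
  rw [FinishesAt, Nat.count_eq_card_filter_range, filter_mem_eq_inter, inter_eq_right.mpr hs]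

theorem card_filter_finishesAt {k : ℕ} (hk : 1 ≤ k) (n : ℕ) :
    #{s ∈ (range (n + 1)).powerset | FinishesAt k (· ∈ s) n} = n.choose (k - 1) := by
  have hfilter : {s ∈ (range (n + 1)).powerset | FinishesAt k (· ∈ s) n} =
      {s ∈ (range (n + 1)).powerset | #s = k ∧ n ∈ s} :=
    filter_congr fun s hs => finishesAt_mem_iff (mem_powerset.mp hs)
  rw [hfilter, ← card_range n, ← card_powersetCard, card_range]
  -- erasing the final head `n` leaves a `(k - 1)`-subset of `range n`
  refine card_nbij' (fun s => s.erase n) (insert n) ?_ ?_ ?_ ?_ <;> intro s hs <;>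
    simp only [coe_filter, mem_coe, mem_powerset, mem_powersetCard] at hs ⊢ <;> grind

def headsWeight (p : ℝ) (N : ℕ) (s : Finset ℕ) : ℝ :=
  p ^ #s * (1 - p) ^ (N - #s)

section Weight

variable {p : ℝ} {N : ℕ}

theorem headsWeight_nonneg (h0 : 0 ≤ p) (h1 : p ≤ 1) (s : Finset ℕ) : 0 ≤ headsWeight p N s :=
  mul_nonneg (pow_nonneg h0 _) (pow_nonneg (sub_nonneg.mpr h1) _)

theorem sum_headsWeight (p : ℝ) (N : ℕ) : ∑ s ∈ (range N).powerset, headsWeight p N s = 1 := by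
  simpa [headsWeight] using sum_pow_mul_eq_add_pow p (1 - p) (range N)

theorem prod_coin_eq_headsWeight {s : Finset ℕ} (hs : s ⊆ range N) :
    ∏ i : Fin N, (if decide ((i : ℕ) ∈ s) then p else 1 - p) = headsWeight p N s := by
  simp only [decide_eq_true_eq]
  rw [Fin.prod_univ_eq_prod_range (fun i => if i ∈ s then p else 1 - p), prod_ite,
    filter_mem_eq_inter, inter_eq_right.mpr hs, filter_notMem_eq_sdiff, prod_const, prod_const,
    card_sdiff_of_subset hs, card_range, headsWeight]

end Weight

def finishProb (p : ℝ) (k n : ℕ) : ℝ :=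
  n.choose (k - 1) * p ^ k * (1 - p) ^ (n + 1 - k)

theorem finishProb_eq_zero_of_lt {p : ℝ} {k n : ℕ} (h : n < k - 1) : finishProb p k n = 0 := by
  simp [finishProb, Nat.choose_eq_zero_of_lt h]

theorem finishProb_add_pred_sq (p : ℝ) {k : ℕ} (hk : 1 ≤ k) (m : ℕ) :
    finishProb p k (m + (k - 1)) ^ 2 =
      ((m + k - 1).choose (k - 1) : ℝ) ^ 2 * p ^ (2 * k) * (1 - p) ^ (2 * m) := by
  rw [finishProb, show m + (k - 1) = m + k - 1 by omega, show m + k - 1 + 1 - k = m by omega]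
  ring

theorem summable_and_tsum_sq_finishProb_shift (p : ℝ) {k : ℕ} (hk : 1 ≤ k)
    (hsum : Summable fun n => finishProb p k n ^ 2) :
    Summable (fun m : ℕ => ((m + k - 1).choose (k - 1) : ℝ) ^ 2 * p ^ (2 * k) * (1 - p) ^ (2 * m)) ∧
      ∑' n, finishProb p k n ^ 2 =
        ∑' m : ℕ, ((m + k - 1).choose (k - 1) : ℝ) ^ 2 * p ^ (2 * k) * (1 - p) ^ (2 * m) := by
  have hshift : Function.Injective (· + (k - 1)) := add_left_injective (k - 1)
  have hvanish (n : ℕ) (hn : n ∉ Set.range (· + (k - 1))) : finishProb p k n ^ 2 = 0 := by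
    rw [finishProb_eq_zero_of_lt (not_le.mp fun h => hn ⟨n - (k - 1), Nat.sub_add_cancel h⟩),
      sq, zero_mul]
  refine ⟨((hshift.summable_iff hvanish).mpr hsum).congr (finishProb_add_pred_sq p hk), ?_⟩
  rw [← hshift.tsum_eq (Function.support_subset_iff'.mpr hvanish)]
  simp only [finishProb_add_pred_sq p hk]

theorem sum_headsWeight_finishesAt (p : ℝ) {k : ℕ} (hk : 1 ≤ k) (n : ℕ) :
    ∑ s ∈ (range (n + 1)).powerset with FinishesAt k (· ∈ s) n, headsWeight p (n + 1) s =
      finishProb p k n := by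
  rw [sum_eq_card_nsmul (b := p ^ k * (1 - p) ^ (n + 1 - k)), card_filter_finishesAt hk,
    nsmul_eq_mul, finishProb, mul_assoc]
  intro s hs
  rw [mem_filter, mem_powerset] at hs
  rw [headsWeight, ((finishesAt_mem_iff hs.1).mp hs.2).1]

section FiniteLaw

variable {Ω α : Type*} [MeasurableSpace Ω] {μ : Measure Ω}

structure IsFiniteLaw (μ : Measure Ω) (X : Ω → α) (U : Finset α) (v : α → ℝ) : Prop where
  mem : ∀ ω, X ω ∈ U
  nonneg : ∀ a ∈ U, 0 ≤ v a
  sum_eq_one : ∑ a ∈ U, v a = 1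
  measure_fiber : ∀ a ∈ U, μ (X ⁻¹' {a}) = ENNReal.ofReal (v a)

variable [IsProbabilityMeasure μ] {X : Ω → α} {U : Finset α} {v : α → ℝ}

theorem IsFiniteLaw.measure_preimage (h : IsFiniteLaw μ X U v) {S : Finset α} (hS : S ⊆ U) :
    μ (X ⁻¹' S) = ENNReal.ofReal (∑ a ∈ S, v a) := by
  classical
  have upper {T : Finset α} (hT : T ⊆ U) : μ (X ⁻¹' T) ≤ ENNReal.ofReal (∑ a ∈ T, v a) :=
    calc μ (X ⁻¹' T) = μ (⋃ a ∈ T, X ⁻¹' {a}) := by rw [← Set.biUnion_preimage_singleton]; rfl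
      _ ≤ ∑ a ∈ T, μ (X ⁻¹' {a}) := measure_biUnion_finset_le T _
      _ = ∑ a ∈ T, ENNReal.ofReal (v a) := sum_congr rfl fun a ha => h.measure_fiber a (hT ha)
      _ = ENNReal.ofReal (∑ a ∈ T, v a) :=
        (ENNReal.ofReal_sum_of_nonneg fun a ha => h.nonneg a (hT ha)).symm
  have hsplit : ENNReal.ofReal (∑ a ∈ S, v a) + ENNReal.ofReal (∑ a ∈ U \ S, v a) = 1 := by
    rw [← ENNReal.ofReal_add (sum_nonneg fun a ha => h.nonneg a (hS ha))
      (sum_nonneg fun a ha => h.nonneg a (sdiff_subset ha)), add_comm, sum_sdiff hS,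
      h.sum_eq_one, ENNReal.ofReal_one]
  have hcover : 1 ≤ μ (X ⁻¹' S) + ENNReal.ofReal (∑ a ∈ U \ S, v a) :=
    calc 1 = μ (X ⁻¹' S ∪ X ⁻¹' ↑(U \ S)) := by
          rw [← Set.preimage_union, ← coe_union, union_sdiff_of_subset hS,
            Set.preimage_eq_univ_iff.mpr fun _ ⟨ω, hω⟩ => hω ▸ h.mem ω, measure_univ]
      _ ≤ μ (X ⁻¹' S) + μ (X ⁻¹' ↑(U \ S)) := measure_union_le _ _
      _ ≤ μ (X ⁻¹' S) + ENNReal.ofReal (∑ a ∈ U \ S, v a) := by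
          gcongr; exact upper sdiff_subset
  exact le_antisymm (upper hS)
    ((ENNReal.add_le_add_iff_right ENNReal.ofReal_ne_top).mp (hsplit.trans_le hcover))

theorem IsFiniteLaw.measure_biUnion_preimage {ι : Type*} (h : IsFiniteLaw μ X U v)
    (I : Finset ι) {S : ι → Finset α} (hS : ∀ i ∈ I, S i ⊆ U)
    (hdisj : (I : Set ι).PairwiseDisjoint S) :
    μ (⋃ i ∈ I, X ⁻¹' S i) = ∑ i ∈ I, μ (X ⁻¹' S i) := by
  classical
  have hunion : ⋃ i ∈ I, X ⁻¹' S i = X ⁻¹' ↑(I.biUnion S) := by ext; simp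
  rw [hunion, h.measure_preimage (biUnion_subset.mpr hS),
    sum_biUnion hdisj, ENNReal.ofReal_sum_of_nonneg
      fun i hi => sum_nonneg fun a ha => h.nonneg a (hS i hi ha)]
  exact sum_congr rfl fun i hi => (h.measure_preimage (hS i hi)).symm

end FiniteLaw

theorem measure_iUnion_eq_ofReal_tsum {Ω : Type*} [MeasurableSpace Ω] {μ : Measure Ω}
    [IsFiniteMeasure μ] {D : ℕ → Set Ω} {r : ℕ → ℝ} (hr : ∀ n, 0 ≤ r n)
    (hD : ∀ n, μ (D n) = ENNReal.ofReal (r n))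
    (hadd : ∀ N, μ (⋃ n ∈ range N, D n) = ∑ n ∈ range N, μ (D n)) :
    Summable r ∧ μ (⋃ n, D n) = ENNReal.ofReal (∑' n, r n) := by
  have htsum : μ (⋃ n, D n) = ∑' n, μ (D n) := by
    refine le_antisymm (measure_iUnion_le D) ?_
    rw [ENNReal.tsum_eq_iSup_nat]
    exact iSup_le fun N => (hadd N).symm.le.trans
      (measure_mono (Set.iUnion₂_subset fun n _ => Set.subset_iUnion D n))
  simp only [hD] at htsum
  have hsum : Summable r := by
    refine (ENNReal.summable_toReal (htsum ▸ measure_ne_top μ _)).congr fun n => ?_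
    exact ENNReal.toReal_ofReal (hr n)
  exact ⟨hsum, htsum.trans (ENNReal.ofReal_tsum_of_nonneg hr hsum).symm⟩

def headsUpTo (b : ℕ → Bool) (N : ℕ) : Finset ℕ :=
  {i ∈ range N | b i = true}

theorem headsUpTo_subset (b : ℕ → Bool) (N : ℕ) : headsUpTo b N ⊆ range N :=
  filter_subset _ _

theorem headsUpTo_eq_iff {b : ℕ → Bool} {N : ℕ} {s : Finset ℕ} (hs : s ⊆ range N) :
    headsUpTo b N = s ↔ ∀ i : Fin N, b i = decide ((i : ℕ) ∈ s) := by
  constructor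
  · rintro rfl i
    simp [headsUpTo]
  · intro h
    ext i
    by_cases hi : i < N
    · simp [headsUpTo, hi, h ⟨i, hi⟩]
    · simpa [headsUpTo, hi] using fun h => hi (mem_range.mp (hs h))

theorem finishesAt_iff_headsUpTo {k n N : ℕ} (b : ℕ → Bool) (hn : n < N) :
    FinishesAt k (b · = true) n ↔ FinishesAt k (· ∈ headsUpTo b N) n :=
  finishesAt_congr fun i hi => by simp [headsUpTo]; omega

section CoinPair

variable {Ω : Type*}

def headsPair (C₁ C₂ : ℕ → Ω → Bool) (N : ℕ) (ω : Ω) : Finset ℕ × Finset ℕ :=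
  (headsUpTo (C₁ · ω) N, headsUpTo (C₂ · ω) N)

def tieAt (k : ℕ) (C₁ C₂ : ℕ → Ω → Bool) (n : ℕ) : Set Ω :=
  {ω | FinishesAt k (C₁ · ω = true) n ∧ FinishesAt k (C₂ · ω = true) n}

def tiePatterns (k N n : ℕ) : Finset (Finset ℕ × Finset ℕ) :=
  {st ∈ (range N).powerset ×ˢ (range N).powerset |
    FinishesAt k (· ∈ st.1) n ∧ FinishesAt k (· ∈ st.2) n}

theorem iUnion_tieAt (k : ℕ) (C₁ C₂ : ℕ → Ω → Bool) :
    ⋃ n, tieAt k C₁ C₂ n = {ω | ∃ n : ℕ,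
      #{i ∈ range (n + 1) | C₁ i ω = true} = k ∧ C₁ n ω = true ∧
      #{i ∈ range (n + 1) | C₂ i ω = true} = k ∧ C₂ n ω = true} := by
  ext ω
  simp [tieAt, FinishesAt, Nat.count_eq_card_filter_range, and_assoc]

theorem tieAt_eq_preimage {k n N : ℕ} (C₁ C₂ : ℕ → Ω → Bool) (hn : n < N) :
    tieAt k C₁ C₂ n = headsPair C₁ C₂ N ⁻¹' ↑(tiePatterns k N n) := by
  ext ω
  simp only [tieAt, finishesAt_iff_headsUpTo _ hn, Set.mem_ofPred_eq, tiePatterns, coe_filter,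
    mem_product, mem_powerset, Set.preimage_ofPred_eq, headsPair, headsUpTo_subset, and_self,
    true_and]
  -- the two sides differ only in their `Decidable` instances
  rfl

theorem pairwise_disjoint_tiePatterns (k N : ℕ) :
    Pairwise fun m n => Disjoint (tiePatterns k N m) (tiePatterns k N n) :=
  fun _ _ hmn => disjoint_left.mpr fun _ hm hn =>
    hmn ((mem_filter.mp hm).2.1.unique (mem_filter.mp hn).2.1)

variable [MeasurableSpace Ω]

def IsIndepCoinPair (μ : Measure Ω) (p : ℝ) (C₁ C₂ : ℕ → Ω → Bool) : Prop :=
  ∀ n : ℕ, ∀ f g : Fin n → Bool,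
    μ {ω | ∀ i : Fin n, C₁ i ω = f i ∧ C₂ i ω = g i} =
      ENNReal.ofReal ((∏ i, if f i then p else 1 - p) * (∏ i, if g i then p else 1 - p))

variable {μ : Measure Ω} {p : ℝ} {C₁ C₂ : ℕ → Ω → Bool}

theorem isFiniteLaw_headsPair (h0 : 0 ≤ p) (h1 : p ≤ 1) (hC : IsIndepCoinPair μ p C₁ C₂)
    (N : ℕ) :
    IsFiniteLaw μ (headsPair C₁ C₂ N) ((range N).powerset ×ˢ (range N).powerset)
      (fun st => headsWeight p N st.1 * headsWeight p N st.2) where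
  mem ω := mem_product.mpr ⟨mem_powerset.mpr (headsUpTo_subset _ _),
    mem_powerset.mpr (headsUpTo_subset _ _)⟩
  nonneg st _ := mul_nonneg (headsWeight_nonneg h0 h1 _) (headsWeight_nonneg h0 h1 _)
  sum_eq_one := by rw [sum_product, ← sum_mul_sum, sum_headsWeight, one_mul]
  measure_fiber := by
    rintro ⟨s, t⟩ hst
    simp only [mem_product, mem_powerset] at hst
    have hfiber : headsPair C₁ C₂ N ⁻¹' {(s, t)} =
        {ω | ∀ i : Fin N, C₁ i ω = decide ((i : ℕ) ∈ s) ∧ C₂ i ω = decide ((i : ℕ) ∈ t)} := by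
      ext ω
      simp only [Set.mem_preimage, Set.mem_singleton_iff, headsPair, Prod.ext_iff,
        headsUpTo_eq_iff hst.1, headsUpTo_eq_iff hst.2, forall_and]
      rfl
    rw [hfiber, hC, prod_coin_eq_headsWeight hst.1, prod_coin_eq_headsWeight hst.2]

variable [IsProbabilityMeasure μ]

theorem measure_tieAt (h0 : 0 ≤ p) (h1 : p ≤ 1) (hC : IsIndepCoinPair μ p C₁ C₂) {k : ℕ}
    (hk : 1 ≤ k) (n : ℕ) : μ (tieAt k C₁ C₂ n) = ENNReal.ofReal (finishProb p k n ^ 2) := by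
  rw [tieAt_eq_preimage C₁ C₂ (Nat.lt_add_one n), tiePatterns,
    (isFiniteLaw_headsPair h0 h1 hC (n + 1)).measure_preimage (filter_subset _ _),
    filter_product (p := fun s => FinishesAt k (· ∈ s) n) (q := fun t => FinishesAt k (· ∈ t) n),
    sum_product, ← sum_mul_sum, sum_headsWeight_finishesAt p hk, sq]

theorem measure_biUnion_tieAt (h0 : 0 ≤ p) (h1 : p ≤ 1) (hC : IsIndepCoinPair μ p C₁ C₂)
    (k N : ℕ) :
    μ (⋃ n ∈ range N, tieAt k C₁ C₂ n) = ∑ n ∈ range N, μ (tieAt k C₁ C₂ n) := by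
  have hpre (n : ℕ) (hn : n ∈ range N) := tieAt_eq_preimage (k := k) C₁ C₂ (mem_range.mp hn)
  rw [Set.iUnion₂_congr hpre, sum_congr rfl fun n hn => congrArg μ (hpre n hn)]
  exact (isFiniteLaw_headsPair h0 h1 hC N).measure_biUnion_preimage _
    (fun n _ => filter_subset _ _) ((pairwise_disjoint_tiePatterns k N).set_pairwise _)

end CoinPair

end MMGame

open MMGame in
/-- For the M&M game with two players each starting with `k ≥ 1` M&M's and coins
of heads-probability `p ∈ (0,1)`, the tie probability equals
`∑_{n=k}^∞ C(n-1,k-1)² p^{2k} (1-p)^{2(n-k)}` (reindexed by `n = m + k`), and the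
series converges. A player finishes at flip `n` iff the `n`-th flip is their
`k`-th head; a tie is both finishing at the same flip. -/
theorem mm_tie_biased_coin {Ω : Type*} [MeasureSpace Ω]
    [IsProbabilityMeasure (ℙ : Measure Ω)] (k : ℕ) (hk : 1 ≤ k) (p : ℝ)
    (hp : p ∈ Set.Ioo (0 : ℝ) 1) (C₁ C₂ : ℕ → Ω → Bool)
    (hiid : ∀ n : ℕ, ∀ f g : Fin n → Bool,
      ℙ {ω | ∀ i : Fin n, C₁ i ω = f i ∧ C₂ i ω = g i} =
        ENNReal.ofReal ((∏ i, if f i then p else 1 - p) *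
          (∏ i, if g i then p else 1 - p))) :
    ℙ {ω | ∃ n : ℕ,
        ((Finset.range (n + 1)).filter fun i => C₁ i ω = true).card = k ∧
        C₁ n ω = true ∧
        ((Finset.range (n + 1)).filter fun i => C₂ i ω = true).card = k ∧
        C₂ n ω = true} =
      ENNReal.ofReal (∑' m : ℕ,
        (((m + k - 1).choose (k - 1) : ℝ)) ^ 2 * p ^ (2 * k) * (1 - p) ^ (2 * m)) ∧
    Summable (fun m : ℕ =>
      (((m + k - 1).choose (k - 1) : ℝ)) ^ 2 * p ^ (2 * k) * (1 - p) ^ (2 * m)) := by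
  obtain ⟨hp0, hp1⟩ := hp
  obtain ⟨hsum, hmeas⟩ := measure_iUnion_eq_ofReal_tsum (fun n => sq_nonneg (finishProb p k n))
    (measure_tieAt hp0.le hp1.le hiid hk) (measure_biUnion_tieAt hp0.le hp1.le hiid k)
  obtain ⟨hsum', htsum⟩ := summable_and_tsum_sq_finishProb_shift p hk hsum
  rw [← iUnion_tieAt, hmeas, htsum]
  exact ⟨rfl, hsum'⟩
end

section
/- In the compressed M&M game with both players starting at k M&M's, the probability of a tie can be written as P(tie) = ∑_{n=0}^{k-1} C(2k-n-2, n) · C(2k-2n-2, k-n-1) · (1/3)^{2k-n-1}, and each summand is the probability that the game ends in a tie with exactly n double-eat moves before the final move. -/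
/-!
Every event involved depends on finitely many moves, so it is the preimage of a set `T` of
words under `ω ↦ (S 0 ω, …, S (m - 1) ω)`. The `3 ^ m` cylinders of length `m` cover `Ω` and
each has probability `3⁻¹ ^ m`, so such an event has probability `#T * 3⁻¹ ^ m`; no
measurability of `S` is needed for this. A tie with `n` double moves before the last one happens
at round `2k - n - 2`, and the moves before it are exactly `n` moves `(1,1)`, `k - 1 - n` moves
`(1,0)` and `k - 1 - n` moves `(0,1)`, in one of `C(2k-n-2, n) C(2k-2n-2, k-n-1)` orders. The
tie round is unique, so the events for different `n` are disjoint.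
-/

open MeasureTheory ProbabilityTheory ENNReal Finset

theorem measure_preimage_finset_of_sum_fibers_le {Ω α : Type*} [MeasurableSpace Ω]
    {μ : Measure Ω} [IsFiniteMeasure μ] {X : Ω → α} {F T : Finset α} (hX : ∀ ω, X ω ∈ F)
    (hF : ∑ a ∈ F, μ (X ⁻¹' {a}) ≤ μ Set.univ) (hT : T ⊆ F) :
    μ (X ⁻¹' T) = ∑ a ∈ T, μ (X ⁻¹' {a}) := by
  classical
  have hle (U : Finset α) : μ (X ⁻¹' U) ≤ ∑ a ∈ U, μ (X ⁻¹' {a}) := by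
    rw [← Set.biUnion_preimage_singleton]
    exact measure_biUnion_finset_le U _
  refine (hle T).antisymm ?_
  have hfin : ∑ a ∈ F \ T, μ (X ⁻¹' {a}) ≠ ∞ :=
    ne_top_of_le_ne_top (measure_ne_top μ _) ((sum_le_sum_of_subset sdiff_subset).trans hF)
  have hcover : Set.univ ⊆ X ⁻¹' T ∪ X ⁻¹' ↑(F \ T) := fun ω _ => by
    by_cases h : X ω ∈ T <;> simp [h, hX ω]
  rw [← ENNReal.add_le_add_iff_right hfin]
  calc ∑ a ∈ T, μ (X ⁻¹' {a}) + ∑ a ∈ F \ T, μ (X ⁻¹' {a})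
      = ∑ a ∈ F, μ (X ⁻¹' {a}) := by rw [add_comm, sum_sdiff hT]
    _ ≤ μ (X ⁻¹' T ∪ X ⁻¹' ↑(F \ T)) := hF.trans (measure_mono hcover)
    _ ≤ μ (X ⁻¹' T) + μ (X ⁻¹' ↑(F \ T)) := measure_union_le _ _
    _ ≤ μ (X ⁻¹' T) + ∑ a ∈ F \ T, μ (X ⁻¹' {a}) := by gcongr; exact hle _

section Words

variable {ι α : Type*} [Fintype ι] [DecidableEq ι] [DecidableEq α] {a b c : α}

def threeLetterWord (a b c : α) (A B : Finset ι) (i : ι) : α :=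
  if i ∈ A then a else if i ∈ B then b else c

theorem filter_threeLetterWord_eq_left (hab : a ≠ b) (hac : a ≠ c) (A B : Finset ι) :
    univ.filter (fun i => threeLetterWord a b c A B i = a) = A := by
  ext i
  by_cases hA : i ∈ A <;> by_cases hB : i ∈ B <;>
    simp [threeLetterWord, hA, hB, hab.symm, hac.symm]

theorem filter_threeLetterWord_eq_mid (hab : a ≠ b) (hbc : b ≠ c) {A B : Finset ι}
    (hAB : Disjoint A B) : univ.filter (fun i => threeLetterWord a b c A B i = b) = B := by
  ext i
  rw [mem_filter, threeLetterWord]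
  by_cases hA : i ∈ A
  · simp [hA, hab, disjoint_left.1 hAB hA]
  · by_cases hB : i ∈ B <;> simp [hA, hB, hbc.symm]

theorem card_words_of_letter_counts (hab : a ≠ b) (hac : a ≠ c) (hbc : b ≠ c) (p q : ℕ) :
    #{f ∈ Fintype.piFinset fun _ : ι => ({a, b, c} : Finset α) |
        #{i | f i = a} = p ∧ #{i | f i = b} = q} =
      (Fintype.card ι).choose p * (Fintype.card ι - p).choose q := by
  have hcount : #((powersetCard p (univ : Finset ι)).sigma fun A => powersetCard q Aᶜ) =
      (Fintype.card ι).choose p * (Fintype.card ι - p).choose q := by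
    rw [card_sigma, sum_congr rfl fun A hA => by
      rw [card_powersetCard, card_compl, (mem_powersetCard.1 hA).2], sum_const,
      card_powersetCard, card_univ, smul_eq_mul]
  rw [← hcount]
  refine card_nbij' (fun f => ⟨univ.filter (f · = a), univ.filter (f · = b)⟩)
    (fun AB => threeLetterWord a b c AB.1 AB.2) ?_ ?_ ?_ ?_
  · intro f hf
    simp only [mem_coe, mem_filter, Fintype.mem_piFinset] at hf
    simp only [coe_sigma, Set.mem_sigma_iff, mem_coe, mem_powersetCard, subset_univ, true_and]
    refine ⟨hf.2.1, fun i hi => ?_, hf.2.2⟩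
    simp_all [Ne.symm hab]
  · rintro ⟨A, B⟩ hAB
    simp only [coe_sigma, Set.mem_sigma_iff, mem_coe, mem_powersetCard, subset_univ, true_and,
      subset_compl_iff_disjoint_left] at hAB
    simp only [mem_coe, mem_filter, Fintype.mem_piFinset]
    rw [filter_threeLetterWord_eq_left hab hac, filter_threeLetterWord_eq_mid hab hbc hAB.2.1]
    refine ⟨fun i => ?_, hAB.1, hAB.2.2⟩
    unfold threeLetterWord; split_ifs <;> simp
  · intro f hf
    simp only [mem_coe, mem_filter, Fintype.mem_piFinset] at hf
    funext i
    have := hf.1 i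
    simp only [mem_insert, mem_singleton] at this
    rcases this with h | h | h <;> simp [threeLetterWord, h, hab.symm, hac.symm, hbc.symm]
  · rintro ⟨A, B⟩ hAB
    simp only [coe_sigma, Set.mem_sigma_iff, mem_coe, mem_powersetCard, subset_univ, true_and,
      subset_compl_iff_disjoint_left] at hAB
    dsimp only
    rw [filter_threeLetterWord_eq_left hab hac, filter_threeLetterWord_eq_mid hab hbc hAB.2.1]

end Words

theorem extend_val_castSucc {β : Type*} [Zero β] {M : ℕ} (f : Fin (M + 1) → β) (i : Fin M) :
    Function.extend Fin.val f 0 i = Fin.init f i :=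
  Fin.val_injective.extend_apply f 0 i.castSucc

namespace CompressedGame

def moves : Finset (ℕ × ℕ) := {(1, 1), (1, 0), (0, 1)}

theorem sum_eq_of_forall_mem_moves {ι : Type*} {s : Finset ι} {g : ι → ℕ × ℕ}
    (hg : ∀ i ∈ s, g i ∈ moves) :
    ∑ i ∈ s, g i = (#{i ∈ s | g i = (1, 1)} + #{i ∈ s | g i = (1, 0)},
      #{i ∈ s | g i = (1, 1)} + #{i ∈ s | g i = (0, 1)}) := by
  rw [← sum_fiberwise_of_maps_to hg]
  have (v : ℕ × ℕ) : ∑ i ∈ s with g i = v, g i = #{i ∈ s | g i = v} • v :=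
    (sum_congr rfl fun i hi => (mem_filter.1 hi).2).trans (sum_const v)
  rw [moves, sum_insert (by decide), sum_insert (by decide), sum_singleton, this, this, this]
  ext <;> simp

theorem card_eq_of_forall_mem_moves {ι : Type*} {s : Finset ι} {g : ι → ℕ × ℕ}
    (hg : ∀ i ∈ s, g i ∈ moves) :
    #s = #{i ∈ s | g i = (1, 1)} + #{i ∈ s | g i = (1, 0)} + #{i ∈ s | g i = (0, 1)} := by
  rw [card_eq_sum_card_fiberwise hg]
  simp [moves, add_assoc]

def TiesAt (k n N : ℕ) (g : ℕ → ℕ × ℕ) : Prop :=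
  ∑ i ∈ range N, g i = (k - 1, k - 1) ∧ g N = (1, 1) ∧ #{i ∈ range N | g i = (1, 1)} = n

instance (k n N : ℕ) (g : ℕ → ℕ × ℕ) : Decidable (TiesAt k n N g) :=
  inferInstanceAs (Decidable (_ ∧ _ ∧ _))

section TiesAt

variable {k n n' N N' : ℕ} {g g' : ℕ → ℕ × ℕ}

theorem TiesAt.round_eq_and_le (hg : ∀ i, g i ∈ moves) (h : TiesAt k n N g) :
    N = 2 * k - n - 2 ∧ n ≤ k - 1 := by
  obtain ⟨hsum, -, hn⟩ := h
  have hsum' := sum_eq_of_forall_mem_moves (s := range N) fun i _ => hg i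
  have hcard := card_eq_of_forall_mem_moves (s := range N) fun i _ => hg i
  rw [hsum, hn, Prod.ext_iff] at hsum'
  rw [card_range, hn] at hcard
  dsimp only at hsum'
  omega

theorem TiesAt.congr (h : ∀ i ≤ N, g i = g' i) : TiesAt k n N g ↔ TiesAt k n N g' := by
  have hlt : ∀ i ∈ range N, g i = g' i := fun i hi => h i (mem_range.1 hi).le
  rw [TiesAt, TiesAt, sum_congr rfl hlt, filter_congr fun i hi => by rw [hlt i hi], h N le_rfl]

theorem TiesAt.unique (h : TiesAt k n N g) (h' : TiesAt k n' N' g) : N = N' := by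
  by_contra hne
  wlog hlt : N < N' generalizing n n' N N'
  · exact this h' h (Ne.symm hne) (by omega)
  -- the first coordinate would keep growing after the double move at `N`
  have hmono := sum_le_sum_of_subset (f := fun i => (g i).1) (range_subset_range.2 hlt)
  rw [sum_range_succ, ← Prod.fst_sum, ← Prod.fst_sum, h.1, h'.1, h.2.1] at hmono
  simp at hmono

end TiesAt

-- `Function.extend Fin.val f 0` reads the word `f` as a path, padded with `0`.
noncomputable def tieWords (k n m : ℕ) : Finset (Fin m → ℕ × ℕ) :=
  {f ∈ Fintype.piFinset fun _ => moves |
    TiesAt k n (2 * k - n - 2) (Function.extend Fin.val f 0)}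

theorem tieWords_subset {k n m : ℕ} : tieWords k n m ⊆ Fintype.piFinset fun _ => moves :=
  filter_subset _ _

theorem tiesAt_extend_iff {k n M : ℕ} (hM : M = 2 * k - n - 2) (hn : n < k)
    {f : Fin (M + 1) → ℕ × ℕ} (hf : ∀ i, f i ∈ moves) :
    TiesAt k n M (Function.extend Fin.val f 0) ↔ f (Fin.last M) = (1, 1) ∧
      #{i | Fin.init f i = (1, 1)} = n ∧ #{i | Fin.init f i = (1, 0)} = k - n - 1 := by
  have hrange : range M = (univ : Finset (Fin M)).map Fin.valEmbedding := by
    rw [Fin.map_valEmbedding_univ, Nat.Iio_eq_range]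
  have hsum : ∑ i ∈ range M, Function.extend Fin.val f 0 i = ∑ i, Fin.init f i := by
    simp only [hrange, sum_map, Fin.valEmbedding_apply, extend_val_castSucc]
  have hcount (v : ℕ × ℕ) :
      #{i ∈ range M | Function.extend Fin.val f 0 i = v} = #{i | Fin.init f i = v} := by
    rw [hrange, filter_map, card_map]
    simp only [Function.comp_def, Fin.valEmbedding_apply, extend_val_castSucc]
  have hlast : Function.extend Fin.val f 0 M = f (Fin.last M) :=
    Fin.val_injective.extend_apply f 0 (Fin.last M)
  have hinit : ∀ i ∈ univ, Fin.init f i ∈ moves := fun i _ => hf _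
  have hsum' := sum_eq_of_forall_mem_moves hinit
  have hcard := card_eq_of_forall_mem_moves hinit
  rw [card_univ, Fintype.card_fin] at hcard
  rw [TiesAt, hsum, hlast, hcount, hsum', Prod.ext_iff]
  dsimp only
  constructor
  · rintro ⟨⟨h1, -⟩, hl, hD⟩
    exact ⟨hl, hD, by omega⟩
  · rintro ⟨hl, hD, hA⟩
    exact ⟨⟨by omega, by omega⟩, hl, hD⟩

theorem card_tieWords {k n : ℕ} (hn : n < k) :
    #(tieWords k n (2 * k - n - 1)) =
      (2 * k - n - 2).choose n * (2 * k - 2 * n - 2).choose (k - n - 1) := by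
  set M := 2 * k - n - 2 with hM
  have hW := card_words_of_letter_counts (ι := Fin M)
    (by decide : ((1, 1) : ℕ × ℕ) ≠ (1, 0)) (by decide) (by decide : ((1, 0) : ℕ × ℕ) ≠ (0, 1))
    n (k - n - 1)
  rw [Fintype.card_fin, show M - n = 2 * k - 2 * n - 2 by omega] at hW
  rw [← hW, show 2 * k - n - 1 = M + 1 by omega]
  refine card_nbij' Fin.init (Fin.snoc · (1, 1)) ?_ ?_ ?_ ?_
  · intro f hf
    simp only [tieWords, mem_coe, mem_filter, Fintype.mem_piFinset] at hf ⊢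
    exact ⟨fun i => hf.1 _, ((tiesAt_extend_iff hM hn hf.1).1 hf.2).2⟩
  · intro w hw
    simp only [tieWords, mem_coe, mem_filter, Fintype.mem_piFinset] at hw ⊢
    have hsnoc : ∀ i, (Fin.snoc w (1, 1) : Fin (M + 1) → ℕ × ℕ) i ∈ moves :=
      Fin.lastCases (by simp [moves]) fun i => by rw [Fin.snoc_castSucc]; exact hw.1 i
    refine ⟨hsnoc, (tiesAt_extend_iff hM hn hsnoc).2 ?_⟩
    simpa only [Fin.snoc_last, Fin.init_snoc, true_and] using hw.2
  · intro f hf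
    simp only [tieWords, mem_coe, mem_filter, Fintype.mem_piFinset] at hf
    dsimp only
    rw [← ((tiesAt_extend_iff hM hn hf.1).1 hf.2).1, Fin.snoc_init_self]
  · intro w _
    exact Fin.init_snoc _ _

theorem tieWords_disjoint {k n n' m : ℕ} (hn : n < k) (hn' : n' < k) (hne : n ≠ n') :
    Disjoint (tieWords k n m) (tieWords k n' m) := by
  refine disjoint_left.2 fun f hf hf' => hne ?_
  have := (mem_filter.1 hf).2.unique (mem_filter.1 hf').2
  omega

section Paths

variable {Ω : Type*} {S : ℕ → Ω → ℕ × ℕ}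

def firstMoves (S : ℕ → Ω → ℕ × ℕ) (m : ℕ) (ω : Ω) : Fin m → ℕ × ℕ := fun i => S i ω

def tieEvent (S : ℕ → Ω → ℕ × ℕ) (k n : ℕ) : Set Ω := {ω | ∃ N, TiesAt k n N (S · ω)}

theorem tieEvent_eq_preimage (hS : ∀ i ω, S i ω ∈ moves) {k n m : ℕ}
    (hm : 2 * k - n - 2 < m) : tieEvent S k n = firstMoves S m ⁻¹' tieWords k n m := by
  ext ω
  have hagree : ∀ i ≤ 2 * k - n - 2,
      S i ω = Function.extend Fin.val (firstMoves S m ω) 0 i := fun i hi =>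
    (Fin.val_injective.extend_apply (firstMoves S m ω) 0 ⟨i, by omega⟩).symm
  simp only [tieEvent, tieWords, Set.mem_ofPred_eq, Set.mem_preimage, mem_coe, mem_filter,
    Fintype.mem_piFinset]
  constructor
  · rintro ⟨N, h⟩
    obtain rfl := (h.round_eq_and_le (hS · ω)).1
    exact ⟨fun i => hS i ω, (TiesAt.congr hagree).1 h⟩
  · rintro ⟨-, h⟩
    exact ⟨_, (TiesAt.congr hagree).2 h⟩

theorem setOf_tie_eq_biUnion_tieEvent (hS : ∀ i ω, S i ω ∈ moves) {k : ℕ} (hk : 1 ≤ k) :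
    {ω | ∃ N : ℕ, (∑ i ∈ range N, S i ω) = (k - 1, k - 1) ∧ S N ω = (1, 1)} =
      ⋃ n ∈ range k, tieEvent S k n := by
  ext ω
  simp only [tieEvent, Set.mem_ofPred_eq, Set.mem_iUnion, mem_range, exists_prop]
  constructor
  · rintro ⟨N, hsum, hlast⟩
    have h : TiesAt k _ N (S · ω) := ⟨hsum, hlast, rfl⟩
    exact ⟨_, by have := (h.round_eq_and_le (hS · ω)).2; omega, N, h⟩
  · rintro ⟨n, -, N, hsum, hlast, -⟩
    exact ⟨N, hsum, hlast⟩

end Paths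

section Probability

variable {Ω : Type*} [MeasureSpace Ω] [IsProbabilityMeasure (ℙ : Measure Ω)]
  {S : ℕ → Ω → ℕ × ℕ}

theorem measure_firstMoves_preimage (hS : ∀ i ω, S i ω ∈ moves)
    (hcyl : ∀ m (f : Fin m → ℕ × ℕ), (∀ i, f i ∈ moves) →
      ℙ {ω | ∀ i : Fin m, S i ω = f i} = (1 / 3) ^ m)
    {m : ℕ} {T : Finset (Fin m → ℕ × ℕ)} (hT : T ⊆ Fintype.piFinset fun _ => moves) :
    ℙ (firstMoves S m ⁻¹' T) = #T * (1 / 3) ^ m := by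
  have hfiber : ∀ f ∈ Fintype.piFinset (fun _ : Fin m => moves),
      ℙ (firstMoves S m ⁻¹' {f}) = (1 / 3) ^ m := fun f hf => by
    rw [← hcyl m f (Fintype.mem_piFinset.1 hf)]
    congr 1
    ext ω
    simp [firstMoves, funext_iff]
  have hsum : ∑ f ∈ Fintype.piFinset (fun _ : Fin m => moves), ℙ (firstMoves S m ⁻¹' {f})
      ≤ ℙ (Set.univ : Set Ω) := by
    rw [sum_congr rfl hfiber, sum_const, Fintype.card_piFinset_const, measure_univ,
      nsmul_eq_mul, show #moves = 3 from rfl]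
    push_cast
    rw [one_div, ← mul_pow, ENNReal.mul_inv_cancel (by norm_num) (by norm_num), one_pow]
  rw [measure_preimage_finset_of_sum_fibers_le (X := firstMoves S m)
    (fun ω => Fintype.mem_piFinset.2 fun i => hS i ω) hsum hT,
    sum_congr rfl fun f hf => hfiber f (hT hf), sum_const, nsmul_eq_mul]

theorem measure_biUnion_tieEvent (hS : ∀ i ω, S i ω ∈ moves)
    (hcyl : ∀ m (f : Fin m → ℕ × ℕ), (∀ i, f i ∈ moves) →
      ℙ {ω | ∀ i : Fin m, S i ω = f i} = (1 / 3) ^ m)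
    {k : ℕ} (hk : 1 ≤ k) :
    ℙ (⋃ n ∈ range k, tieEvent S k n) = ∑ n ∈ range k, ℙ (tieEvent S k n) := by
  have hE : ∀ n ∈ range k,
      tieEvent S k n = firstMoves S (2 * k - 1) ⁻¹' tieWords k n (2 * k - 1) :=
    fun n _ => tieEvent_eq_preimage hS (by omega)
  have hdisj : (range k : Set ℕ).PairwiseDisjoint (tieWords k · (2 * k - 1)) :=
    fun n hn n' hn' hne => tieWords_disjoint (mem_range.1 hn) (mem_range.1 hn') hne
  calc ℙ (⋃ n ∈ range k, tieEvent S k n)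
      = ℙ (firstMoves S (2 * k - 1) ⁻¹' ↑((range k).biUnion (tieWords k · (2 * k - 1)))) := by
        rw [coe_biUnion, Set.preimage_iUnion₂]
        exact congrArg ℙ (Set.iUnion₂_congr hE)
    _ = ∑ n ∈ range k, ℙ (tieEvent S k n) := by
        rw [measure_firstMoves_preimage hS hcyl (biUnion_subset.2 fun n _ => tieWords_subset),
          card_biUnion hdisj, Nat.cast_sum, sum_mul]
        refine sum_congr rfl fun n hn => ?_
        rw [hE n hn, measure_firstMoves_preimage hS hcyl tieWords_subset]

end Probability

end CompressedGame

open CompressedGame in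
/-- In the compressed M&M game (each round one of: both eat `(1,1)`, only player 1
eats `(1,0)`, only player 2 eats `(0,1)`, each with probability `1/3`,
independently), starting from `(0,0)` and counting eaten M&M's up to `k` each, the
tie probability is `∑_{n=0}^{k-1} C(2k-n-2,n) C(2k-2n-2,k-n-1) (1/3)^{2k-n-1}`,
and the summand for `n` is the probability of a tie with exactly `n` double-eat
moves before the final (double-eat) move. -/
theorem compressed_game_tie_prob {Ω : Type*} [MeasureSpace Ω]
    [IsProbabilityMeasure (ℙ : Measure Ω)] (k : ℕ) (hk : 1 ≤ k)
    (S : ℕ → Ω → ℕ × ℕ)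
    (hrange : ∀ n ω, S n ω ∈ ({(1, 1), (1, 0), (0, 1)} : Set (ℕ × ℕ)))
    (hiid : ∀ n : ℕ, ∀ f : Fin n → ℕ × ℕ,
      (∀ i, f i ∈ ({(1, 1), (1, 0), (0, 1)} : Set (ℕ × ℕ))) →
      ℙ {ω | ∀ i : Fin n, S i ω = f i} = (1 / 3) ^ n) :
    ℙ {ω | ∃ N : ℕ, (∑ i ∈ Finset.range N, S i ω) = (k - 1, k - 1) ∧
        S N ω = (1, 1)} =
      ∑ n ∈ Finset.range k,
        ((2 * k - n - 2).choose n : ℝ≥0∞) * ((2 * k - 2 * n - 2).choose (k - n - 1)) *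
          (1 / 3) ^ (2 * k - n - 1) ∧
    ∀ n ∈ Finset.range k,
      ℙ {ω | ∃ N : ℕ, (∑ i ∈ Finset.range N, S i ω) = (k - 1, k - 1) ∧
          S N ω = (1, 1) ∧
          ((Finset.range N).filter fun i => S i ω = (1, 1)).card = n} =
        ((2 * k - n - 2).choose n : ℝ≥0∞) * ((2 * k - 2 * n - 2).choose (k - n - 1)) *
          (1 / 3) ^ (2 * k - n - 1) := by
  have hS : ∀ n ω, S n ω ∈ moves := by simpa [moves] using hrange
  have hcyl : ∀ n (f : Fin n → ℕ × ℕ), (∀ i, f i ∈ moves) →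
      ℙ {ω | ∀ i : Fin n, S i ω = f i} = (1 / 3) ^ n :=
    fun n f hf => hiid n f (by simpa [moves] using hf)
  have hE : ∀ n ∈ range k, ℙ (tieEvent S k n) =
      ((2 * k - n - 2).choose n : ℝ≥0∞) * ((2 * k - 2 * n - 2).choose (k - n - 1)) *
        (1 / 3) ^ (2 * k - n - 1) := fun n hn => by
    have hn := mem_range.1 hn
    rw [tieEvent_eq_preimage hS (m := 2 * k - n - 1) (by omega),
      measure_firstMoves_preimage hS hcyl tieWords_subset, card_tieWords hn]
    push_cast
    rfl
  refine ⟨?_, hE⟩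
  rw [setOf_tie_eq_biUnion_tieEvent hS hk, measure_biUnion_tieEvent hS hcyl hk]
  exact sum_congr rfl hE
end
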